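/- Let γ > 0, g(t) = (log(log(10+t²)))^γ, and n ≥ 3. Define F̃(z) = ∫₀^{|z|} s^{(n+2)/(n-2)} ( (4/(n-2)) g(s) + s g'(s) ) ds. Then F̃(z) ≥ 0 for all z, and there exists c > 0 with F̃(z) ≥ c |z|^{2n/(n-2)} g(|z|) for all |z| ≥ 1. -/

import Mathlib

noncomputable def gd (γ : ℝ) (t : ℝ) : ℝ :=
  γ * Real.log (Real.log (10 + t ^ 2)) ^ (γ - 1) *
    ((Real.log (10 + t ^ 2))⁻¹ * ((10 + t ^ 2)⁻¹ * (2 * t)))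

lemma base_pos (t : ℝ) : (0 : ℝ) < 10 + t ^ 2 := by positivity

lemma log_gt_one (t : ℝ) : 1 < Real.log (10 + t ^ 2) := by
  rw [Real.lt_log_iff_exp_lt (base_pos t)]
  have := Real.exp_one_lt_d9
  nlinarith [sq_nonneg t]

lemma log_pos' (t : ℝ) : 0 < Real.log (10 + t ^ 2) := lt_trans one_pos (log_gt_one t)

lemma loglog_pos (t : ℝ) : 0 < Real.log (Real.log (10 + t ^ 2)) := Real.log_pos (log_gt_one t)

lemma hasDerivAt_g (γ : ℝ) (t : ℝ) :
    HasDerivAt (fun t : ℝ => Real.log (Real.log (10 + t ^ 2)) ^ γ) (gd γ t) t := by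
  have h1 : HasDerivAt (fun t : ℝ => 10 + t ^ 2) (2 * t) t := by
    simpa using ((hasDerivAt_pow 2 t).const_add 10)
  have h2 := (Real.hasDerivAt_log (ne_of_gt (base_pos t))).comp t h1
  have h3 := (Real.hasDerivAt_log (ne_of_gt (log_pos' t))).comp t h2
  have h4 := (Real.hasDerivAt_rpow_const
    (x := Real.log (Real.log (10 + t ^ 2))) (p := γ)
    (Or.inl (ne_of_gt (loglog_pos t)))).comp t h3
  exact h4

lemma deriv_g_eq (γ : ℝ) :
    deriv (fun t : ℝ => Real.log (Real.log (10 + t ^ 2)) ^ γ) = gd γ :=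
  funext fun t => (hasDerivAt_g γ t).deriv

lemma gd_nonneg {γ : ℝ} (hγ : 0 < γ) {t : ℝ} (ht : 0 ≤ t) : 0 ≤ gd γ t := by
  unfold gd
  have h1 := (loglog_pos t).le
  have h2 := (log_pos' t).le
  have h3 := (base_pos t).le
  have h4 : (0:ℝ) ≤ Real.log (Real.log (10 + t ^ 2)) ^ (γ - 1) := Real.rpow_nonneg h1 _
  positivity

lemma log_base_continuous : Continuous (fun t : ℝ => Real.log (10 + t ^ 2)) :=
  Continuous.log (by fun_prop) fun t => ne_of_gt (base_pos t)

lemma loglog_continuous : Continuous (fun t : ℝ => Real.log (Real.log (10 + t ^ 2))) :=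
  Continuous.log log_base_continuous fun t => ne_of_gt (log_pos' t)

lemma g_continuous (γ : ℝ) : Continuous (fun t : ℝ => Real.log (Real.log (10 + t ^ 2)) ^ γ) :=
  loglog_continuous.rpow_const fun t => Or.inl (ne_of_gt (loglog_pos t))

lemma gd_continuous (γ : ℝ) : Continuous (gd γ) := by
  unfold gd
  refine Continuous.mul ?_ ?_
  · exact continuous_const.mul (loglog_continuous.rpow_const fun t => Or.inl (ne_of_gt (loglog_pos t)))
  · refine Continuous.mul (Continuous.inv₀ log_base_continuous fun t => ne_of_gt (log_pos' t)) ?_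
    exact Continuous.mul (Continuous.inv₀ (by fun_prop) fun t => ne_of_gt (base_pos t)) (by fun_prop)

theorem stmt_11 (n : ℕ) (hn : 3 ≤ n) (γ : ℝ) (hγ : 0 < γ) :
    (∀ z : ℂ,
      0 ≤ ∫ s in (0 : ℝ)..(‖z‖),
        s ^ (((n : ℝ) + 2) / ((n : ℝ) - 2)) *
          ((4 / ((n : ℝ) - 2)) * Real.log (Real.log (10 + s ^ 2)) ^ γ +
            s * deriv (fun t : ℝ => Real.log (Real.log (10 + t ^ 2)) ^ γ) s)) ∧
    ∃ c : ℝ, 0 < c ∧ ∀ z : ℂ, 1 ≤ ‖z‖ →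
      c * ‖z‖ ^ ((2 * n : ℝ) / (n - 2)) *
          Real.log (Real.log (10 + ‖z‖ ^ 2)) ^ γ ≤
        ∫ s in (0 : ℝ)..(‖z‖),
          s ^ (((n : ℝ) + 2) / ((n : ℝ) - 2)) *
            ((4 / ((n : ℝ) - 2)) * Real.log (Real.log (10 + s ^ 2)) ^ γ +
              s * deriv (fun t : ℝ => Real.log (Real.log (10 + t ^ 2)) ^ γ) s) := by
  have hn3 : (3:ℝ) ≤ (n:ℝ) := by exact_mod_cast hn
  have hn2 : (0:ℝ) < (n:ℝ) - 2 := by linarith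
  have hnpos : (0:ℝ) < (n:ℝ) := by linarith
  set p : ℝ := ((n:ℝ) + 2) / ((n:ℝ) - 2) with hp
  set q : ℝ := 2 * (n:ℝ) / ((n:ℝ) - 2) with hq
  have hppos : 0 < p := by rw [hp]; positivity
  have hq1 : 1 ≤ q := by rw [hq, le_div_iff₀ hn2]; linarith
  have hq0 : q ≠ 0 := (lt_of_lt_of_le one_pos hq1).ne'
  have hqp1 : q = p + 1 := by rw [hp, hq]; field_simp; ring
  have hqm1 : q - 1 = p := by rw [hqp1]; ring
  simp only [deriv_g_eq γ]
  have hint_cont : Continuous (fun s : ℝ =>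
      s ^ p * (4 / ((n:ℝ) - 2) * Real.log (Real.log (10 + s ^ 2)) ^ γ + s * gd γ s)) := by
    refine Continuous.mul (continuous_id.rpow_const fun x => Or.inr hppos.le) ?_
    exact ((continuous_const.mul (g_continuous γ)).add (continuous_id.mul (gd_continuous γ)))
  have hint_nonneg : ∀ s : ℝ, 0 ≤ s →
      0 ≤ s ^ p * (4 / ((n:ℝ) - 2) * Real.log (Real.log (10 + s ^ 2)) ^ γ + s * gd γ s) := by
    intro s hs
    have h1 : (0:ℝ) ≤ s ^ p := Real.rpow_nonneg hs _
    have h2 : (0:ℝ) ≤ Real.log (Real.log (10 + s ^ 2)) ^ γ := Real.rpow_nonneg (loglog_pos s).le _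
    have h3 := gd_nonneg hγ hs
    have h4 : (0:ℝ) ≤ 4 / ((n:ℝ) - 2) := by positivity
    exact mul_nonneg h1 (add_nonneg (mul_nonneg h4 h2) (mul_nonneg hs h3))
  constructor
  · intro z
    exact intervalIntegral.integral_nonneg (norm_nonneg z)
      fun u hu => hint_nonneg u hu.1
  · refine ⟨2 / (n:ℝ), by positivity, ?_⟩
    intro z hz
    set R := ‖z‖ with hR
    have hR0 : (0:ℝ) ≤ R := norm_nonneg z
    have hG : ∀ s : ℝ, HasDerivAt (fun s : ℝ => s ^ q * Real.log (Real.log (10 + s ^ 2)) ^ γ)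
        (q * s ^ (q - 1) * Real.log (Real.log (10 + s ^ 2)) ^ γ + s ^ q * gd γ s) s :=
      fun s => (Real.hasDerivAt_rpow_const (Or.inr hq1)).mul (hasDerivAt_g γ s)
    have hG'cont : Continuous (fun s : ℝ =>
        q * s ^ (q - 1) * Real.log (Real.log (10 + s ^ 2)) ^ γ + s ^ q * gd γ s) := by
      refine Continuous.add ?_ ?_
      · exact (continuous_const.mul (continuous_id.rpow_const
          fun x => Or.inr (by rw [hqm1]; exact hppos.le))).mul (g_continuous γ)
      · exact (continuous_id.rpow_const fun x => Or.inr (le_trans one_pos.le hq1)).mul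
          (gd_continuous γ)
    have hftc : (∫ s in (0:ℝ)..R,
        (q * s ^ (q - 1) * Real.log (Real.log (10 + s ^ 2)) ^ γ + s ^ q * gd γ s))
        = R ^ q * Real.log (Real.log (10 + R ^ 2)) ^ γ := by
      rw [intervalIntegral.integral_eq_sub_of_hasDerivAt (fun x _ => hG x)
        (hG'cont.intervalIntegrable 0 R)]
      rw [Real.zero_rpow hq0]
      ring
    have hpt : ∀ s ∈ Set.Icc (0:ℝ) R,
        2 / (n:ℝ) * (q * s ^ (q - 1) * Real.log (Real.log (10 + s ^ 2)) ^ γ + s ^ q * gd γ s)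
          ≤ s ^ p * (4 / ((n:ℝ) - 2) * Real.log (Real.log (10 + s ^ 2)) ^ γ + s * gd γ s) := by
      rintro s ⟨hs0, -⟩
      rcases eq_or_lt_of_le hs0 with h | h
      · rw [← h]
        rw [Real.zero_rpow hq0, Real.zero_rpow (hqm1 ▸ ne_of_gt hppos),
          Real.zero_rpow (ne_of_gt hppos)]
        simp
      · have hsq : s ^ q = s ^ p * s := by
          rw [hqp1, Real.rpow_add h, Real.rpow_one]
        have hsqm : s ^ (q - 1) = s ^ p := by rw [hqm1]
        rw [hsq, hsqm]
        have hkey : 2 / (n:ℝ) * q = 4 / ((n:ℝ) - 2) := by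
          rw [hq]; field_simp; ring
        have h1 : (0:ℝ) ≤ s ^ p := Real.rpow_nonneg hs0 _
        have h3 := gd_nonneg hγ hs0
        have h2n : 2 / (n:ℝ) ≤ 1 := by rw [div_le_one hnpos]; linarith
        have hprod : (0:ℝ) ≤ s ^ p * s * gd γ s := mul_nonneg (mul_nonneg h1 hs0) h3
        rw [← hkey]
        nlinarith [mul_nonneg hprod (sub_nonneg.mpr h2n)]
    have hmono := intervalIntegral.integral_mono_on (μ := MeasureTheory.volume) hR0
      ((continuous_const.mul hG'cont).intervalIntegrable 0 R)
      (hint_cont.intervalIntegrable 0 R) hpt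
    calc 2 / (n:ℝ) * R ^ q * Real.log (Real.log (10 + R ^ 2)) ^ γ
        = 2 / (n:ℝ) * (R ^ q * Real.log (Real.log (10 + R ^ 2)) ^ γ) := by ring
      _ = ∫ s in (0:ℝ)..R, 2 / (n:ℝ) *
            (q * s ^ (q - 1) * Real.log (Real.log (10 + s ^ 2)) ^ γ + s ^ q * gd γ s) := by
          rw [intervalIntegral.integral_const_mul, hftc]
      _ ≤ _ := hmono
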